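/- For all λ, α ∈ ℂ, the 4-dimensional algebra L⁴₂₃(λ,α) with basis e₁,e₂,e₃,e₄ and nonzero products e₁e₁ = e₂, e₁e₂ = e₃, e₁e₃ = ((2-λ)α+1)e₄, e₂e₁ = λe₃, e₂e₂ = (λα+1)e₄, e₃e₁ = (λα-1)e₄ is a nilpotent left-symmetric algebra. -/

import Mathlib

/-- Span of the set of products of an element of `S` with an element of `T`. -/
def mulSpan {V : Type*} [AddCommGroup V] [Module ℂ V] (mul : V → V → V)
    (S T : Submodule ℂ V) : Submodule ℂ V :=
  Submodule.span ℂ {z | ∃ x ∈ S, ∃ y ∈ T, z = mul x y}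

/-- `piece mul n` is the span of all products of `n + 1` elements of the
algebra `(V, mul)`, with all possible bracketings. -/
def piece {V : Type*} [AddCommGroup V] [Module ℂ V] (mul : V → V → V) : ℕ → Submodule ℂ V
  | 0 => ⊤
  | n + 1 => ⨆ i : Fin (n + 1), mulSpan mul (piece mul i.1) (piece mul (n - i.1))

/-- An algebra is nilpotent if some power (with all bracketings) is zero. -/
def IsNilpotentMul {V : Type*} [AddCommGroup V] [Module ℂ V] (mul : V → V → V) : Prop :=
  ∃ n : ℕ, piece mul n = ⊥

/-- Multiplication of the algebra `L⁴₂₃(λ,α)`: on the basis `e₁, e₂, e₃, e₄`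
(indexed `0,…,3`) the nonzero products are `e₁e₁ = e₂`, `e₁e₂ = e₃`,
`e₁e₃ = ((2-λ)α+1)e₄`, `e₂e₁ = λe₃`, `e₂e₂ = (λα+1)e₄`, `e₃e₁ = (λα-1)e₄`. -/
def mulL423 (l a : ℂ) (x y : Fin 4 → ℂ) : Fin 4 → ℂ :=
  ![0, x 0 * y 0, x 0 * y 1 + l * (x 1 * y 0),
    ((2 - l) * a + 1) * (x 0 * y 2) + (l * a + 1) * (x 1 * y 1) +
      (l * a - 1) * (x 2 * y 0)]

/-!
Give the basis vector `e_{k+1}` (coordinate `k`) weight `k` and let `F k` be the span of the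
basis vectors of weight at least `k`. The product of `L⁴₂₃(λ,α)` is filtered,
`F p * F q ⊆ F (p + q + 1)`, so a product of `n + 1` factors lies in `F n` whatever its
bracketing, and `F 4 = 0`. Left-symmetry is a polynomial identity in the coordinates.
-/

section Filtration

variable {V : Type*} [AddCommGroup V] [Module ℂ V]

theorem piece_le_of_mul_mem (mul : V → V → V) (F : ℕ → Submodule ℂ V) (h0 : F 0 = ⊤)
    (hmul : ∀ p q x y, x ∈ F p → y ∈ F q → mul x y ∈ F (p + q + 1)) (n : ℕ) :
    piece mul n ≤ F n := by
  induction n using Nat.strong_induction_on with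
  | _ n ih =>
    cases n with
    | zero => simp [piece, h0]
    | succ n =>
      rw [piece]
      refine iSup_le fun i => Submodule.span_le.mpr ?_
      rintro _ ⟨x, hx, y, hy, rfl⟩
      have hn : i.1 + (n - i.1) + 1 = n + 1 := by omega
      rw [SetLike.mem_coe, ← hn]
      exact hmul _ _ x y (ih i.1 (by omega) hx) (ih (n - i.1) (by omega) hy)

theorem isNilpotentMul_of_mul_mem (mul : V → V → V) (F : ℕ → Submodule ℂ V) (h0 : F 0 = ⊤)
    (hmul : ∀ p q x y, x ∈ F p → y ∈ F q → mul x y ∈ F (p + q + 1))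
    {N : ℕ} (hN : F N = ⊥) : IsNilpotentMul mul :=
  ⟨N, eq_bot_iff.mpr (hN ▸ piece_le_of_mul_mem mul F h0 hmul N :)⟩

end Filtration

section CoordFiltration

def coordFiltration (R : Type*) [Semiring R] (d k : ℕ) : Submodule R (Fin d → R) :=
  Submodule.pi {m | (m : ℕ) < k} fun _ => ⊥

variable {R : Type*} [Semiring R] {d : ℕ}

theorem mem_coordFiltration {k : ℕ} {x : Fin d → R} :
    x ∈ coordFiltration R d k ↔ ∀ m : Fin d, (m : ℕ) < k → x m = 0 := by
  simp [coordFiltration, Submodule.mem_pi]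

theorem coordFiltration_zero : coordFiltration R d 0 = ⊤ :=
  eq_top_iff.mpr fun _ _ => mem_coordFiltration.mpr fun _ hm => absurd hm (Nat.not_lt_zero _)

theorem coordFiltration_self : coordFiltration R d d = ⊥ :=
  eq_bot_iff.mpr fun _ hx => (Submodule.mem_bot R).mpr <|
    funext fun m => mem_coordFiltration.mp hx m m.isLt

theorem mul_eq_zero_of_mem_coordFiltration {p q : ℕ} {x y : Fin d → R}
    (hx : x ∈ coordFiltration R d p) (hy : y ∈ coordFiltration R d q) {i j : Fin d}
    (hij : (i : ℕ) + j < p + q) : x i * y j = 0 := by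
  rcases lt_or_ge (i : ℕ) p with hi | hi
  · simp [mem_coordFiltration.mp hx i hi]
  · simp [mem_coordFiltration.mp hy j (by omega)]

end CoordFiltration

theorem mulL423_mem_coordFiltration (l a : ℂ) {p q : ℕ} {x y : Fin 4 → ℂ}
    (hx : x ∈ coordFiltration ℂ 4 p) (hy : y ∈ coordFiltration ℂ 4 q) :
    mulL423 l a x y ∈ coordFiltration ℂ 4 (p + q + 1) := by
  have h : ∀ i j : Fin 4, (i : ℕ) + j < p + q → x i * y j = 0 :=
    fun _ _ => mul_eq_zero_of_mem_coordFiltration hx hy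
  refine mem_coordFiltration.mpr fun m hm => ?_
  fin_cases m <;> simp at hm <;> simp (disch := simp; omega) [mulL423, h]

theorem mulL423_leftSymmetric (l a : ℂ) (x y z : Fin 4 → ℂ) :
    mulL423 l a (mulL423 l a x y) z - mulL423 l a x (mulL423 l a y z) =
      mulL423 l a (mulL423 l a y x) z - mulL423 l a y (mulL423 l a x z) := by
  funext i
  fin_cases i <;> simp [mulL423] <;> ring

/-- for all `λ, α ∈ ℂ`, the algebra `L⁴₂₃(λ,α)` is a nilpotent
left-symmetric algebra. -/
theorem L423_nilpotent_leftSymmetric (l a : ℂ) :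
    (∀ x y z : Fin 4 → ℂ,
      mulL423 l a (mulL423 l a x y) z - mulL423 l a x (mulL423 l a y z) =
      mulL423 l a (mulL423 l a y x) z - mulL423 l a y (mulL423 l a x z)) ∧
    IsNilpotentMul (mulL423 l a) :=
  ⟨mulL423_leftSymmetric l a,
    isNilpotentMul_of_mul_mem _ (coordFiltration ℂ 4) coordFiltration_zero
      (fun _ _ _ _ => mulL423_mem_coordFiltration l a) coordFiltration_self⟩
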